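/- The 3-cocycle ω := (inf ω₀)·dξ on S₄ is adapted to H = ⟨(1234)⟩, i.e., ω(g₁,g₂,h) = 1 for all g₁, g₂ ∈ S₄ and h ∈ H. -/
import Mathlib


open Equiv

abbrev S4 := Equiv.Perm (Fin 4)

/-- the 4-cycle (1234), zero-indexed as (0 1 2 3) -/
def fourCycle : S4 := Equiv.swap 0 1 * Equiv.swap 1 2 * Equiv.swap 2 3

/-- the 3-cycle (123), zero-indexed as (0 1 2) -/
def threeCycle : S4 := Equiv.swap 0 1 * Equiv.swap 1 2

/-- H = ⟨(1234)⟩ ≤ S₄. -/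
def Hsub : Subgroup S4 := Subgroup.zpowers fourCycle

/-- The copy of S₃ inside S₄ as the stabilizer of the last point. -/
def S3sub : Subgroup S4 := MulAction.stabilizer S4 (3 : Fin 4)

/-- N = {e, (12)(34), (13)(24), (14)(23)} (zero-indexed), as a set. -/
def NSet : Set S4 := {1, Equiv.swap 0 1 * Equiv.swap 2 3, Equiv.swap 0 2 * Equiv.swap 1 3,
  Equiv.swap 0 3 * Equiv.swap 1 2}

/-- ε(g) ∈ {0,1} defined by sgn(g) = (-1)^{ε(g)}. -/
def eps (g : S4) : ℕ := if Equiv.Perm.sign g = 1 then 0 else 1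

/-- f₀((1234)^z) = 1 for z = 0,1 and -1 for z = 2,3, as a function on H. -/
def f0 (g : S4) : ℤ := if g = 1 ∨ g = fourCycle then 1 else -1

/-- the 2-cochain ξ(g₁,g₂) = f(g₂)^{ε(g₁)} -/
def xi (f : S4 → ℤ) (g₁ g₂ : S4) : ℂ := ((f g₂ : ℤ) : ℂ) ^ eps g₁

/-- the coboundary dξ(g₁,g₂,g₃) = ξ(g₂,g₃) ξ(g₁g₂,g₃)⁻¹ ξ(g₁,g₂g₃) ξ(g₁,g₂)⁻¹ -/
noncomputable def dxi (f : S4 → ℤ) (g₁ g₂ g₃ : S4) : ℂ :=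
  xi f g₂ g₃ * (xi f (g₁ * g₂) g₃)⁻¹ * xi f g₁ (g₂ * g₃) * (xi f g₁ g₂)⁻¹

/-- α(a,b,c) = exp(2πi (a + b - [a+b]₃) c / 9) -/
noncomputable def alphaFun (a b c : ℤ) : ℂ :=
  Complex.exp (2 * (Real.pi : ℂ) * Complex.I * (((a + b - (a + b) % 3) * c : ℤ) : ℂ) / 9)

/-- the x-coordinate of an element (123)^x (13)^y of S₃ ≤ S₄ -/
def Xc (g : S4) : ℤ :=
  if g = 1 ∨ g = Equiv.swap 0 2 then 0
  else if g = threeCycle ∨ g = threeCycle * Equiv.swap 0 2 then 1 else 2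

/-- the y-coordinate of an element (123)^x (13)^y of S₃ ≤ S₄ -/
def Yc (g : S4) : ℕ := eps g

/-- ω₀ on the copy of S₃ inside S₄, in the coordinates σ = (123)^x (13)^y. -/
noncomputable def omega0 (g₁ g₂ g₃ : S4) : ℂ :=
  alphaFun (Xc g₁) ((-1) ^ Yc g₁ * Xc g₂) ((-1) ^ (Yc g₁ + Yc g₂) * Xc g₃) *
    (-1 : ℂ) ^ (Yc g₁ * Yc g₂ * Yc g₃)

/-- the inflation of ω₀ along π : S₄ → S₃ -/
noncomputable def infOmega0 (π : S4 →* S4) (g₁ g₂ g₃ : S4) : ℂ :=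
  omega0 (π g₁) (π g₂) (π g₃)

/-- the adapted 3-cocycle ω = (inf ω₀)·dξ on S₄ -/
noncomputable def omegaAd (π : S4 →* S4) (f : S4 → ℤ) (g₁ g₂ g₃ : S4) : ℂ :=
  infOmega0 π g₁ g₂ g₃ * dxi f g₁ g₂ g₃

/- ## Auxiliary definitions and lemmas -/

/-- the element of N sending 3 to the given point -/
def nOf : Fin 4 → S4
| 3 => 1
| 2 => Equiv.swap 0 1 * Equiv.swap 2 3
| 1 => Equiv.swap 0 2 * Equiv.swap 1 3
| 0 => Equiv.swap 0 3 * Equiv.swap 1 2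

/-- explicit formula for the projection π : S₄ → S₃ -/
def pfun (g : S4) : S4 := nOf (g 3) * g

/-- the H-component of g in the factorization S₄ = S₃·H -/
def hOf (g : S4) : S4 :=
  if g⁻¹ 3 = 3 then 1 else if g⁻¹ 3 = 2 then fourCycle
  else if g⁻¹ 3 = 1 then fourCycle ^ 2 else fourCycle ^ 3

/-- explicit formula for f -/
def Ffun (g : S4) : ℤ := f0 (hOf g) * (-1) ^ (eps (g * (hOf g)⁻¹) * eps (hOf g))

set_option maxRecDepth 10000 in
theorem keyInt : ∀ g₁ g₂ h : S4,
    (h = 1 ∨ h = fourCycle ∨ h = fourCycle ^ 2 ∨ h = fourCycle ^ 3) →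
    (-1 : ℤ) ^ (eps (pfun g₁) * eps (pfun g₂) * eps (pfun h)) *
      (Ffun h ^ eps g₂ * Ffun h ^ eps (g₁ * g₂) * Ffun (g₂ * h) ^ eps g₁ *
        Ffun g₂ ^ eps g₁) = 1 := by decide

theorem mem_S3sub_iff (g : S4) : g ∈ S3sub ↔ g 3 = 3 := by
  rw [S3sub, MulAction.mem_stabilizer_iff]; rfl

theorem mem_NSet_iff (g : S4) : g ∈ NSet ↔ (g = 1 ∨ g = Equiv.swap 0 1 * Equiv.swap 2 3 ∨
    g = Equiv.swap 0 2 * Equiv.swap 1 3 ∨ g = Equiv.swap 0 3 * Equiv.swap 1 2) := by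
  simp [NSet]

theorem nOf_decomp' : ∀ g : S4,
    (nOf (g 3) = 1 ∨ nOf (g 3) = Equiv.swap 0 1 * Equiv.swap 2 3 ∨
      nOf (g 3) = Equiv.swap 0 2 * Equiv.swap 1 3 ∨
      nOf (g 3) = Equiv.swap 0 3 * Equiv.swap 1 2) ∧
    (nOf (g 3) * g) 3 = 3 ∧ nOf (g 3) * (nOf (g 3) * g) = g := by decide

theorem nOf_decomp (g : S4) : nOf (g 3) ∈ NSet ∧ nOf (g 3) * g ∈ S3sub ∧
    nOf (g 3) * (nOf (g 3) * g) = g := by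
  obtain ⟨h1, h2, h3⟩ := nOf_decomp' g
  exact ⟨(mem_NSet_iff _).2 h1, (mem_S3sub_iff _).2 h2, h3⟩

theorem hOf_decomp' : ∀ g : S4, (g * (hOf g)⁻¹) 3 = 3 := by decide

theorem hOf_decomp (g : S4) : g * (hOf g)⁻¹ ∈ S3sub :=
  (mem_S3sub_iff _).2 (hOf_decomp' g)

theorem hOf_mem (g : S4) : hOf g ∈ Hsub := by
  unfold hOf
  split_ifs
  · exact one_mem _
  · exact Subgroup.mem_zpowers _
  · exact pow_mem (Subgroup.mem_zpowers _) 2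
  · exact pow_mem (Subgroup.mem_zpowers _) 3

theorem Xc_pfun : ∀ h : S4,
    (h = 1 ∨ h = fourCycle ∨ h = fourCycle ^ 2 ∨ h = fourCycle ^ 3) →
    Xc (pfun h) = 0 := by decide

theorem Ffun_pm : ∀ g : S4, Ffun g = 1 ∨ Ffun g = -1 := by decide

theorem alpha_zero (a b : ℤ) : alphaFun a b 0 = 1 := by
  simp [alphaFun]

theorem inv_pm_pow {x : ℤ} (hx : x = 1 ∨ x = -1) (n : ℕ) :
    ((x : ℂ) ^ n)⁻¹ = (x : ℂ) ^ n := by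
  rcases hx with rfl | rfl
  · simp
  · push_cast
    rw [← inv_pow, inv_neg, inv_one]

theorem fourCycle_pow4 : fourCycle ^ (4 : ℕ) = 1 := by decide

theorem mem_H (h : S4) (hh : h ∈ Hsub) :
    h = 1 ∨ h = fourCycle ∨ h = fourCycle ^ 2 ∨ h = fourCycle ^ 3 := by
  obtain ⟨z, hz⟩ := hh
  have hz' : fourCycle ^ z = h := hz
  have hc4 : fourCycle ^ (4 : ℤ) = 1 := by
    rw [show (4 : ℤ) = ((4 : ℕ) : ℤ) by norm_num, zpow_natCast, fourCycle_pow4]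
  have key : h = fourCycle ^ (z % 4) := by
    rw [← hz']
    conv_lhs => rw [show z = 4 * (z / 4) + z % 4 from (Int.mul_ediv_add_emod z 4).symm]
    rw [zpow_add, zpow_mul, hc4, one_zpow, one_mul]
  have hr : z % 4 = 0 ∨ z % 4 = 1 ∨ z % 4 = 2 ∨ z % 4 = 3 := by omega
  rcases hr with hr | hr | hr | hr <;> rw [hr] at key <;> rw [key]
  · left; exact zpow_zero _
  · right; left; exact zpow_one _
  · right; right; left
    rw [show (2 : ℤ) = ((2 : ℕ) : ℤ) by norm_num, zpow_natCast]
  · right; right; right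
    rw [show (3 : ℤ) = ((3 : ℕ) : ℤ) by norm_num, zpow_natCast]

/-- The 3-cocycle ω = (inf ω₀)·dξ on S₄ is adapted to H = ⟨(1234)⟩:
ω(g₁,g₂,h) = 1 for all g₁,g₂ ∈ S₄ and h ∈ H. -/
theorem omegaAd_adapted (π : S4 →* S4)
    (hker : ∀ g : S4, π g = 1 ↔ g ∈ NSet)
    (hid : ∀ σ ∈ S3sub, π σ = σ)
    (f : S4 → ℤ)
    (hdef : ∀ σ ∈ S3sub, ∀ h ∈ Hsub, f (σ * h) = f0 h * (-1) ^ (eps σ * eps h)) :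
    ∀ g₁ g₂ : S4, ∀ h ∈ Hsub, omegaAd π f g₁ g₂ h = 1 := by
  have hπ : ∀ g : S4, π g = pfun g := by
    intro g
    obtain ⟨hn, hs, hdec⟩ := nOf_decomp g
    have : π g = π (nOf (g 3)) * π (nOf (g 3) * g) := by
      rw [← map_mul, hdec]
    rw [this, (hker _).2 hn, hid _ hs, one_mul]; rfl
  have hf : ∀ g : S4, f g = Ffun g := by
    intro g
    have : f g = f (g * (hOf g)⁻¹ * hOf g) := by rw [inv_mul_cancel_right]
    rw [this, hdef _ (hOf_decomp g) _ (hOf_mem g), Ffun]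
  intro g₁ g₂ h hh
  have hcases := mem_H h hh
  unfold omegaAd infOmega0 omega0 dxi xi
  rw [hπ g₁, hπ g₂, hπ h, hf h, hf (g₂ * h), hf g₂,
    Xc_pfun h hcases, mul_zero, alpha_zero, one_mul,
    inv_pm_pow (Ffun_pm h), inv_pm_pow (Ffun_pm g₂)]
  have hk := keyInt g₁ g₂ h hcases
  unfold Yc
  calc (-1 : ℂ) ^ (eps (pfun g₁) * eps (pfun g₂) * eps (pfun h)) *
      ((Ffun h : ℂ) ^ eps g₂ * (Ffun h : ℂ) ^ eps (g₁ * g₂) *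
        (Ffun (g₂ * h) : ℂ) ^ eps g₁ * (Ffun g₂ : ℂ) ^ eps g₁)
      = (((-1 : ℤ) ^ (eps (pfun g₁) * eps (pfun g₂) * eps (pfun h)) *
        (Ffun h ^ eps g₂ * Ffun h ^ eps (g₁ * g₂) * Ffun (g₂ * h) ^ eps g₁ *
          Ffun g₂ ^ eps g₁) : ℤ) : ℂ) := by push_cast; ring
    _ = 1 := by rw [hk]; norm_num
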